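/- arXiv:1205.1702 — 3 statements merged into one kernel-verified Lean document; each statement's English description precedes it below -/
import Mathlib

section
/- Let α : ℝ → ℝ be smooth with α > 0 and with h(t) := α(t)·sinh(t) having everywhere nonzero derivative, and define φ : ℝ^{n+2} → ℝ^{n+2} by φ(t, z¹,…,z^{n+1}) = (α(t)·sinh t, z¹·α(t)·cosh t, …, z^{n+1}·α(t)·cosh t). Then φ is a diffeomorphism from ℝ^{n+2} onto (a,b) × ℝ^{n+1}, where (a,b) is the image of h. -/
section Aux

/-- A differentiable real function with everywhere nonzero derivative is injective. -/
lemma aux_injective_of_deriv_ne_zero (h : ℝ → ℝ) (hdiff : Differentiable ℝ h)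
    (hd : ∀ t, deriv h t ≠ 0) : Function.Injective h := by
  have key : ∀ a b : ℝ, a < b → h a ≠ h b := by
    intro a b hab hEq
    obtain ⟨c, _, hc⟩ := exists_deriv_eq_slope h hab hdiff.continuous.continuousOn
      (hdiff.differentiableOn)
    apply hd c
    rw [hc, hEq, sub_self, zero_div]
  intro a b hab
  by_contra hne
  rcases lt_or_gt_of_ne hne with hlt | hlt
  · exact key a b hlt hab
  · exact key b a hlt hab.symm

end Aux

/-- The map `φ (t, z) = (α t · sinh t, z · α t · cosh t)` is a diffeomorphism
from `ℝ × ℝ^{n+1}` onto `(a,b) × ℝ^{n+1}`, where `(a,b)` is the image of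
`h t = α t · sinh t`: it is smooth, injective, has range `(range h) × ℝ^{n+1}`,
and its inverse is smooth on that range. -/
theorem stmt_2 (n : ℕ) (hn : 1 ≤ n) (α : ℝ → ℝ) (hα : ContDiff ℝ (⊤ : ℕ∞) α)
    (hpos : ∀ t, 0 < α t)
    (h : ℝ → ℝ) (hh : ∀ t, h t = α t * Real.sinh t)
    (hd : ∀ t, deriv h t ≠ 0)
    (φ : ℝ × (Fin (n + 1) → ℝ) → ℝ × (Fin (n + 1) → ℝ))
    (hφ : ∀ t z, φ (t, z) = (α t * Real.sinh t, fun i => z i * α t * Real.cosh t)) :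
    Function.Injective φ ∧
    Set.range φ = (Set.range h) ×ˢ (Set.univ : Set (Fin (n + 1) → ℝ)) ∧
    ContDiff ℝ (⊤ : ℕ∞) φ ∧
    ContDiffOn ℝ (⊤ : ℕ∞) (Function.invFun φ) (Set.range φ) := by
  -- basic facts
  have hg : ∀ t, 0 < α t * Real.cosh t := fun t => mul_pos (hpos t) (Real.cosh_pos t)
  have hgne : ∀ t, α t * Real.cosh t ≠ 0 := fun t => (hg t).ne'
  have hheq : h = fun t => α t * Real.sinh t := funext hh
  have hch : ContDiff ℝ (⊤ : ℕ∞) h := by rw [hheq]; exact hα.mul Real.contDiff_sinh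
  have hdiffh : Differentiable ℝ h := hch.differentiable (by simp)
  have hinjh : Function.Injective h := aux_injective_of_deriv_ne_zero h hdiffh hd
  -- φ as an explicit function
  have hφeq : φ = fun p => (h p.1, fun i => p.2 i * (α p.1 * Real.cosh p.1)) := by
    funext p
    obtain ⟨t, z⟩ := p
    rw [hφ, hh]
    simp [mul_assoc]
  -- invertible derivative data for h
  have hfd : ∀ t, HasFDerivAt h
      ((ContinuousLinearEquiv.unitsEquivAut ℝ (Units.mk0 (deriv h t) (hd t)) : ℝ →L[ℝ] ℝ)) t := by
    intro t
    have h1 : HasDerivAt h (deriv h t) t := (hdiffh t).hasDerivAt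
    have h2 : HasFDerivAt h (ContinuousLinearMap.smulRight (1 : ℝ →L[ℝ] ℝ) (deriv h t)) t := h1
    have h3 : (ContinuousLinearEquiv.unitsEquivAut ℝ (Units.mk0 (deriv h t) (hd t)) : ℝ →L[ℝ] ℝ)
        = ContinuousLinearMap.smulRight (1 : ℝ →L[ℝ] ℝ) (deriv h t) := by
      ext x
      simp [ContinuousLinearEquiv.unitsEquivAut_apply, mul_comm]
    rw [h3]
    exact h2
  have hstrict : ∀ t, HasStrictFDerivAt h
      ((ContinuousLinearEquiv.unitsEquivAut ℝ (Units.mk0 (deriv h t) (hd t)) : ℝ →L[ℝ] ℝ)) t :=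
    fun t => hch.contDiffAt.hasStrictFDerivAt' (hfd t) (by simp)
  -- range h is open
  have hopenh : IsOpen (Set.range h) := by
    rw [isOpen_iff_mem_nhds]
    rintro x ⟨t, rfl⟩
    filter_upwards [(hstrict t).eventually_right_inverse] with y hy
    exact ⟨_, hy⟩
  -- invFun h is smooth at each point of range h
  have hinvh : ∀ t, ContDiffAt ℝ (⊤ : ℕ∞) (Function.invFun h) (h t) := by
    intro t
    have h1 : ContDiffAt ℝ (⊤ : ℕ∞) (hch.contDiffAt.localInverse (hfd t) (by simp)) (h t) :=
      hch.contDiffAt.to_localInverse (hfd t) (by simp)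
    apply h1.congr_of_eventuallyEq
    exact (hstrict t).localInverse_unique
      (Filter.Eventually.of_forall fun x => Function.leftInverse_invFun hinjh x)
  -- injectivity of φ
  have hinjφ : Function.Injective φ := by
    rintro ⟨t, z⟩ ⟨s, w⟩ hEq
    rw [hφ, hφ] at hEq
    have h1 : α t * Real.sinh t = α s * Real.sinh s := congrArg Prod.fst hEq
    have hts : t = s := hinjh (by rw [hh, hh]; exact h1)
    subst hts
    have h2 : (fun i => z i * α t * Real.cosh t) = fun i => w i * α t * Real.cosh t :=
      congrArg Prod.snd hEq
    have h3 : z = w := by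
      funext i
      have := congrFun h2 i
      have h4 : z i * (α t * Real.cosh t) = w i * (α t * Real.cosh t) := by
        rw [← mul_assoc, ← mul_assoc]; exact this
      exact mul_right_cancel₀ (hgne t) h4
    rw [h3]
  -- range of φ
  have hrange : Set.range φ = (Set.range h) ×ˢ (Set.univ : Set (Fin (n + 1) → ℝ)) := by
    ext q
    constructor
    · rintro ⟨⟨t, z⟩, rfl⟩
      rw [hφ]
      exact ⟨⟨t, hh t⟩, trivial⟩
    · obtain ⟨x, w⟩ := q
      rintro ⟨⟨t, rfl⟩, -⟩
      refine ⟨(t, fun i => w i / (α t * Real.cosh t)), ?_⟩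
      rw [hφ, hh]
      refine Prod.ext rfl ?_
      funext i
      simp only []
      rw [mul_assoc, div_mul_cancel₀ _ (hgne t)]
  -- smoothness of φ
  have hsmooth : ContDiff ℝ (⊤ : ℕ∞) φ := by
    rw [hφeq]
    refine ContDiff.prodMk (hch.comp contDiff_fst) ?_
    rw [contDiff_pi]
    intro i
    exact ((contDiff_pi.mp contDiff_snd) i).mul
      ((hα.comp contDiff_fst).mul (Real.contDiff_cosh.comp contDiff_fst))
  refine ⟨hinjφ, hrange, hsmooth, ?_⟩
  -- smoothness of the inverse on the range
  intro p hp
  rw [hrange] at hp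
  obtain ⟨x, w⟩ := p
  obtain ⟨⟨t, rfl⟩, -⟩ := hp
  -- explicit inverse ψ
  set ψ : ℝ × (Fin (n + 1) → ℝ) → ℝ × (Fin (n + 1) → ℝ) := fun q =>
    (Function.invFun h q.1,
      fun i => q.2 i * (α (Function.invFun h q.1) * Real.cosh (Function.invFun h q.1))⁻¹)
    with hψdef
  have hinvt : Function.invFun h (h t) = t := Function.leftInverse_invFun hinjh t
  set p : ℝ × (Fin (n + 1) → ℝ) := (h t, w) with hpdef
  have hψsm : ContDiffAt ℝ (⊤ : ℕ∞) ψ p := by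
    have hq1 : ContDiffAt ℝ (⊤ : ℕ∞) (fun q : ℝ × (Fin (n + 1) → ℝ) => Function.invFun h q.1) p := by
      have := (hinvh t).comp p (contDiffAt_fst (p := p))
      exact this
    have hqα : ContDiffAt ℝ (⊤ : ℕ∞)
        (fun q : ℝ × (Fin (n + 1) → ℝ) =>
          α (Function.invFun h q.1) * Real.cosh (Function.invFun h q.1)) p :=
      (hα.contDiffAt.comp p hq1).mul (Real.contDiff_cosh.contDiffAt.comp p hq1)
    have hne : α (Function.invFun h p.1) * Real.cosh (Function.invFun h p.1) ≠ 0 := by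
      simp only [hpdef, hinvt]
      exact hgne t
    refine ContDiffAt.prodMk hq1 ?_
    rw [contDiffAt_pi]
    intro i
    exact (((contDiff_pi.mp contDiff_snd) i).contDiffAt).mul (hqα.inv hne)
  have hψinv : Function.invFun φ =ᶠ[nhds p] ψ := by
    have hmem : (Set.range h) ×ˢ (Set.univ : Set (Fin (n + 1) → ℝ)) ∈ nhds p :=
      (hopenh.prod isOpen_univ).mem_nhds ⟨⟨t, rfl⟩, trivial⟩
    filter_upwards [hmem] with q hq
    obtain ⟨⟨s, hs⟩, -⟩ := hq
    obtain ⟨x, w⟩ := q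
    simp only at hs
    subst hs
    have hφval : φ (s, fun i => w i * (α s * Real.cosh s)⁻¹) = (h s, w) := by
      rw [hφ, hh]
      refine Prod.ext rfl ?_
      funext i
      show w i * (α s * Real.cosh s)⁻¹ * α s * Real.cosh s = w i
      rw [mul_assoc]
      exact inv_mul_cancel_right₀ (hgne s) (w i)
    have h1 : Function.invFun φ (h s, w) = (s, fun i => w i * (α s * Real.cosh s)⁻¹) := by
      rw [← hφval]
      exact Function.leftInverse_invFun hinjφ _
    rw [h1, hψdef]
    simp only [Function.leftInverse_invFun hinjh s]
  exact ((hψsm.congr_of_eventuallyEq hψinv).contDiffWithinAt)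
end

section
/- Let α : ℝ → ℝ be smooth and positive with |α'(t)| > α(t) for all t and with α'(t)·tanh(t) + α(t) ≠ 0 for all t. Then α'(t)·tanh(t) + α(t) > 0 for all t, α' has constant sign, and: if α' > 0 everywhere then −tanh(t) < α(t)/α'(t) < 1 for all t and lim_{t→−∞} α(t)/α'(t) = 1; if α' < 0 everywhere then −1 < α(t)/α'(t) < −tanh(t) for all t and lim_{t→∞} α(t)/α'(t) = −1. -/
open Filter

lemma tanh_formula (x : ℝ) :
    Real.tanh x = (1 - Real.exp (-2 * x)) / (1 + Real.exp (-2 * x)) := by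
  have hx : (0:ℝ) < Real.exp x := Real.exp_pos x
  rw [Real.tanh_eq_sinh_div_cosh, Real.sinh_eq, Real.cosh_eq,
    show (-2*x) = (-x) + (-x) by ring, Real.exp_add, Real.exp_neg]
  rw [div_eq_div_iff (by positivity) (by positivity)]
  field_simp

lemma tanh_tendsto_atTop : Tendsto Real.tanh atTop (nhds 1) := by
  have h0 : Tendsto (fun x : ℝ => Real.exp (-2 * x)) atTop (nhds 0) := by
    apply Real.tendsto_exp_atBot.comp
    exact (tendsto_const_mul_atBot_of_neg (by norm_num)).2 tendsto_id
  have h1 : Tendsto (fun x : ℝ => 1 - Real.exp (-2 * x)) atTop (nhds (1 - 0)) :=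
    tendsto_const_nhds.sub h0
  have h2 : Tendsto (fun x : ℝ => 1 + Real.exp (-2 * x)) atTop (nhds (1 + 0)) :=
    tendsto_const_nhds.add h0
  have h3 := h1.div h2 (by norm_num)
  norm_num only at h3
  refine (Tendsto.congr (fun x => ?_) h3)
  simp only [Pi.div_apply]
  rw [← tanh_formula]

lemma neg_tanh_tendsto_atBot : Tendsto (fun t : ℝ => -Real.tanh t) atBot (nhds 1) := by
  have : Tendsto (fun t : ℝ => Real.tanh (-t)) atBot (nhds 1) :=
    tanh_tendsto_atTop.comp tendsto_neg_atBot_atTop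
  exact this.congr fun t => by rw [Real.tanh_neg]

lemma continuous_tanh' : Continuous Real.tanh := by
  have : Continuous fun x => Real.sinh x / Real.cosh x :=
    Real.continuous_sinh.div Real.continuous_cosh fun x => (Real.cosh_pos x).ne'
  exact this.congr fun x => (Real.tanh_eq_sinh_div_cosh x).symm

lemma sign_const {g : ℝ → ℝ} (hg : Continuous g) (hne : ∀ t, g t ≠ 0) {t0 : ℝ}
    (h0 : 0 < g t0) : ∀ t, 0 < g t := by
  intro t
  by_contra h
  push_neg at h
  have hmem : (0:ℝ) ∈ Set.uIcc (g t) (g t0) := Set.mem_uIcc.2 (Or.inl ⟨h, le_of_lt h0⟩)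
  obtain ⟨c, _, hc⟩ := intermediate_value_uIcc hg.continuousOn hmem
  exact hne c hc

/-- If `α` is smooth and positive with `|α'| > α` everywhere and
`α' tanh t + α ≠ 0` everywhere, then `α' tanh t + α > 0` everywhere, `α'` has
constant sign, and: if `α' > 0` everywhere then `-tanh t < α/α' < 1` for all `t`
and `α/α' → 1` as `t → -∞`; if `α' < 0` everywhere then `-1 < α/α' < -tanh t`
for all `t` and `α/α' → -1` as `t → ∞`. -/
theorem stmt_15 (α : ℝ → ℝ) (hα : ContDiff ℝ (⊤ : ℕ∞) α) (hpos : ∀ t, 0 < α t)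
    (hsp : ∀ t, α t < |deriv α t|)
    (hne : ∀ t, deriv α t * Real.tanh t + α t ≠ 0) :
    (∀ t, 0 < deriv α t * Real.tanh t + α t) ∧
    ((∀ t, 0 < deriv α t) ∨ (∀ t, deriv α t < 0)) ∧
    ((∀ t, 0 < deriv α t) →
      (∀ t, -Real.tanh t < α t / deriv α t ∧ α t / deriv α t < 1) ∧
      Tendsto (fun t => α t / deriv α t) atBot (nhds 1)) ∧
    ((∀ t, deriv α t < 0) →
      (∀ t, -1 < α t / deriv α t ∧ α t / deriv α t < -Real.tanh t) ∧
      Tendsto (fun t => α t / deriv α t) atTop (nhds (-1))) := by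
  have hd : Continuous (deriv α) := hα.continuous_deriv (by simp)
  have hdne : ∀ t, deriv α t ≠ 0 := by
    intro t h
    have := hsp t
    rw [h] at this
    simp at this
    exact absurd this (not_lt.2 (le_of_lt (hpos t)))
  -- α' tanh + α > 0 everywhere
  have hcont : Continuous (fun t => deriv α t * Real.tanh t + α t) :=
    (hd.mul continuous_tanh').add hα.continuous
  have h0 : 0 < deriv α 0 * Real.tanh 0 + α 0 := by simp [Real.tanh_zero, hpos 0]
  have hfpos : ∀ t, 0 < deriv α t * Real.tanh t + α t := sign_const hcont hne h0
  refine ⟨hfpos, ?_, ?_, ?_⟩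
  · -- constant sign of α'
    rcases lt_or_gt_of_ne (hdne 0) with h | h
    · right
      intro t
      have h' := sign_const (g := fun t => -deriv α t) hd.neg
        (fun t h => hdne t (neg_eq_zero.1 h)) (t0 := 0) (by simpa using h) t
      simp only [neg_pos] at h'
      exact h' 
    · left; exact sign_const hd hdne h
  · -- α' > 0 case
    intro hdp
    have key : ∀ t, -Real.tanh t < α t / deriv α t ∧ α t / deriv α t < 1 := by
      intro t
      have h1 := hfpos t
      have h2 := hsp t
      rw [abs_of_pos (hdp t)] at h2
      constructor
      · rw [lt_div_iff₀ (hdp t)]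
        nlinarith [h1]
      · rw [div_lt_one (hdp t)]; exact h2
    refine ⟨key, ?_⟩
    apply tendsto_of_tendsto_of_tendsto_of_le_of_le neg_tanh_tendsto_atBot
      tendsto_const_nhds (fun t => le_of_lt (key t).1) (fun t => le_of_lt (key t).2)
  · -- α' < 0 case
    intro hdn
    have key : ∀ t, -1 < α t / deriv α t ∧ α t / deriv α t < -Real.tanh t := by
      intro t
      have h1 := hfpos t
      have h2 := hsp t
      rw [abs_of_neg (hdn t)] at h2
      constructor
      · rw [lt_div_iff_of_neg (hdn t)]
        linarith
      · rw [div_lt_iff_of_neg (hdn t)]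
        nlinarith [h1]
    refine ⟨key, ?_⟩
    have hlim : Tendsto (fun t : ℝ => -Real.tanh t) atTop (nhds (-1)) := by
      have := tanh_tendsto_atTop.neg
      simpa using this
    apply tendsto_of_tendsto_of_tendsto_of_le_of_le tendsto_const_nhds hlim
      (fun t => le_of_lt (key t).1) (fun t => le_of_lt (key t).2)
end

section
/- Let μ(t) = exp(−1/t²) for t > 0 and μ(t) = 0 for t ≤ 0, let r ≥ r₀ for suitable r₀ > 1, and set a(t) = μ(t)cosh(t) + r, α(t) = a(t)/cosh(t) = μ(t) + r/cosh(t). Then there exists r₀ > 1 such that for all r ≥ r₀: μ'(t) − μ(t)tanh(t) − 2r·tanh(t)/cosh(t) ≤ 0 for all t > 0; consequently a'(t)(a'(t) − 2a(t)tanh(t)) ≤ 0 for all t and hence (α'(t))² − α(t)² < 0 for all t. -/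
/-!
`μ` is flat at the origin (`0 ≤ μ t ≤ 2 t⁴`), so on `(0, 2]` its derivative `μ' ≤ 4 t` is beaten by
`2 r tanh t / cosh t ≥ 2 r t / cosh² 2`, while for `t > 2` already `μ' = 2 μ / t³ ≤ μ tanh t`.
For `a = μ cosh + r` one has `a' - 2 a tanh = cosh · (μ' - μ tanh - 2 r tanh / cosh)` with `a' ≥ 0`,
and `cosh² - sinh² = 1` gives `cosh⁴ ((α')² - α²) = cosh² · a' (a' - 2 a tanh) - a²`.
-/

open Real Asymptotics Filter Topology

noncomputable section

def expNegInvSqGlue (t : ℝ) : ℝ := if 0 < t then exp (-1 / t ^ 2) else 0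

def expNegInvSqGlueDeriv (t : ℝ) : ℝ := if 0 < t then 2 / t ^ 3 * exp (-1 / t ^ 2) else 0

end

lemma exp_neg_one_div_sq_le {t : ℝ} (ht : t ≠ 0) : exp (-1 / t ^ 2) ≤ 2 * t ^ 4 := by
  have hquad := quadratic_le_exp_of_nonneg (by positivity : 0 ≤ 1 / t ^ 2)
  rw [neg_div, exp_neg]
  refine inv_le_of_inv_le₀ (by positivity) ?_
  have hinv : (2 * t ^ 4)⁻¹ = (1 / t ^ 2) ^ 2 / 2 := by field_simp
  rw [hinv]
  linarith [(by positivity : 0 ≤ 1 / t ^ 2)]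

lemma expNegInvSqGlue_nonneg (t : ℝ) : 0 ≤ expNegInvSqGlue t := by
  unfold expNegInvSqGlue; split_ifs <;> positivity

lemma expNegInvSqGlueDeriv_nonneg (t : ℝ) : 0 ≤ expNegInvSqGlueDeriv t := by
  unfold expNegInvSqGlueDeriv; split_ifs <;> positivity

lemma expNegInvSqGlue_le (t : ℝ) : expNegInvSqGlue t ≤ 2 * t ^ 4 := by
  unfold expNegInvSqGlue
  split_ifs with ht
  · exact exp_neg_one_div_sq_le ht.ne'
  · positivity

lemma hasDerivAt_expNegInvSqGlue (t : ℝ) :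
    HasDerivAt expNegInvSqGlue (expNegInvSqGlueDeriv t) t := by
  rcases lt_trichotomy t 0 with ht | rfl | ht
  · have hzero : expNegInvSqGlue =ᶠ[𝓝 t] fun _ => 0 := by
      filter_upwards [eventually_lt_nhds ht] with s hs
      simp [expNegInvSqGlue, hs.not_gt]
    simpa [expNegInvSqGlueDeriv, ht.not_gt] using
      (hasDerivAt_const t (0 : ℝ)).congr_of_eventuallyEq hzero
  · have hO : expNegInvSqGlue =O[𝓝 0] fun s => s ^ 4 :=
      IsBigO.of_bound 2 <| Eventually.of_forall fun s => by
        rw [norm_of_nonneg (expNegInvSqGlue_nonneg s), norm_of_nonneg (by positivity)]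
        exact expNegInvSqGlue_le s
    have hval : expNegInvSqGlue 0 = 0 := by simp [expNegInvSqGlue]
    have hderiv : expNegInvSqGlueDeriv 0 = 0 := by simp [expNegInvSqGlueDeriv]
    rw [hasDerivAt_iff_isLittleO]
    simpa [hval, hderiv] using hO.trans_isLittleO (isLittleO_pow_id (by norm_num))
  · have hexp : expNegInvSqGlue =ᶠ[𝓝 t] fun s => exp (-1 / s ^ 2) := by
      filter_upwards [eventually_gt_nhds ht] with s hs
      simp [expNegInvSqGlue, hs]
    have hinner : HasDerivAt (fun s => -1 / s ^ 2) (2 / t ^ 3) t := by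
      refine ((hasDerivAt_const t (-1 : ℝ)).div (hasDerivAt_pow 2 t) (by positivity)).congr_deriv ?_
      field_simp
      ring
    simpa [expNegInvSqGlueDeriv, ht, mul_comm] using hinner.exp.congr_of_eventuallyEq hexp

lemma cosh_two_le_five : cosh 2 ≤ 5 := by
  have hexp : exp 2 ≤ 9 := by
    rw [show (2 : ℝ) = 1 + 1 by norm_num, exp_add]
    nlinarith [exp_one_lt_d9, exp_pos 1]
  have hexp_neg : exp (-2) ≤ 1 := exp_le_one_iff.2 (by norm_num)
  rw [cosh_eq]
  linarith

lemma half_le_tanh {t : ℝ} (ht : 1 ≤ t) : 1 / 2 ≤ tanh t := by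
  have hexp : 2 ≤ exp t := by linarith [add_one_le_exp t]
  have hprod : exp t * exp (-t) = 1 := by rw [← exp_add, add_neg_cancel, exp_zero]
  rw [tanh_eq_sinh_div_cosh, le_div_iff₀ (cosh_pos t), sinh_eq, cosh_eq]
  nlinarith [exp_pos (-t)]

lemma expNegInvSqGlueDeriv_sub_le {r t : ℝ} (hr : 50 ≤ r) (ht : 0 < t) :
    expNegInvSqGlueDeriv t - expNegInvSqGlue t * tanh t - 2 * r * tanh t / cosh t ≤ 0 := by
  have hc := cosh_pos t
  have htanh : 0 ≤ tanh t := by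
    rw [tanh_eq_sinh_div_cosh]; exact div_nonneg (sinh_nonneg_iff.2 ht.le) hc.le
  simp only [expNegInvSqGlueDeriv, expNegInvSqGlue, if_pos ht]
  rcases le_or_gt t 2 with hsmall | hlarge
  · have hE : exp (-1 / t ^ 2) ≤ 2 * t ^ 4 := exp_neg_one_div_sq_le ht.ne'
    have hcosh : cosh t ≤ 5 :=
      (cosh_le_cosh.2 (by rw [abs_of_pos ht, abs_two]; exact hsmall)).trans cosh_two_le_five
    have hderiv : 2 / t ^ 3 * exp (-1 / t ^ 2) ≤ 4 * t := by
      rw [div_mul_eq_mul_div, div_le_iff₀ (by positivity)]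
      nlinarith
    have hlast : 4 * t ≤ 2 * r * tanh t / cosh t := by
      rw [tanh_eq_sinh_div_cosh, mul_div_assoc', div_div, le_div_iff₀ (by positivity)]
      nlinarith [self_le_sinh_iff.2 ht.le, mul_le_mul hcosh hcosh hc.le (by norm_num : (0 : ℝ) ≤ 5)]
    nlinarith [mul_nonneg (exp_pos (-1 / t ^ 2)).le htanh]
  · have hderiv : 2 / t ^ 3 * exp (-1 / t ^ 2) ≤ exp (-1 / t ^ 2) * tanh t := by
      have hcube : 2 / t ^ 3 ≤ 1 / 2 := by
        rw [div_le_div_iff₀ (by positivity) (by norm_num)]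
        nlinarith [pow_le_pow_left₀ zero_le_two hlarge.le 3]
      nlinarith [half_le_tanh (by linarith : (1 : ℝ) ≤ t), exp_pos (-1 / t ^ 2)]
    have hlast : 0 ≤ 2 * r * tanh t / cosh t := by positivity
    linarith

lemma mul_sub_two_mul_tanh_nonpos {m m' r t : ℝ} (hm : 0 ≤ m) (hm' : 0 ≤ m') (ht : 0 ≤ t)
    (h : m' - m * tanh t - 2 * r * tanh t / cosh t ≤ 0) :
    (m' * cosh t + m * sinh t) * (m' * cosh t + m * sinh t - 2 * (m * cosh t + r) * tanh t)
      ≤ 0 := by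
  have hc := cosh_pos t
  have hfactor : m' * cosh t + m * sinh t - 2 * (m * cosh t + r) * tanh t
      = cosh t * (m' - m * tanh t - 2 * r * tanh t / cosh t) := by
    rw [tanh_eq_sinh_div_cosh]
    field_simp
    ring
  rw [hfactor]
  have hsinh : 0 ≤ sinh t := sinh_nonneg_iff.2 ht
  exact mul_nonpos_of_nonneg_of_nonpos (by positivity) (mul_nonpos_of_nonneg_of_nonpos hc.le h)

lemma deriv_div_cosh_sq_sub_sq_neg {a : ℝ → ℝ} {a' t : ℝ} (ha : HasDerivAt a a' t)
    (h0 : a t ≠ 0) (h : a' * (a' - 2 * a t * tanh t) ≤ 0) :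
    (deriv (fun s => a s / cosh s) t) ^ 2 - (a t / cosh t) ^ 2 < 0 := by
  have hc := cosh_pos t
  have hderiv : HasDerivAt (fun s => a s / cosh s)
      ((a' * cosh t - a t * sinh t) / cosh t ^ 2) t :=
    ha.div (hasDerivAt_cosh t) hc.ne'
  rw [hderiv.deriv]
  have hid : ((a' * cosh t - a t * sinh t) / cosh t ^ 2) ^ 2 - (a t / cosh t) ^ 2
      = (cosh t ^ 2 * (a' * (a' - 2 * a t * tanh t)) - a t ^ 2) / cosh t ^ 4 := by
    rw [tanh_eq_sinh_div_cosh]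
    field_simp
    linear_combination -(a t) ^ 2 * cosh_sq t
  rw [hid]
  refine div_neg_of_neg_of_pos ?_ (by positivity)
  nlinarith [pow_pos hc 2, pow_pos (abs_pos.2 h0) 2, sq_abs (a t)]

/-- With `μ t = exp (-1/t²)` for `t > 0` and `μ t = 0` for `t ≤ 0`,
`a t = μ t cosh t + r`, `α t = a t / cosh t`: there exists `r₀ > 1` such that
for all `r ≥ r₀`, `μ' t - μ t tanh t - 2r tanh t / cosh t ≤ 0` for all `t > 0`;
consequently `a' (a' - 2 a tanh t) ≤ 0` for all `t` and `(α')² - α² < 0`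
for all `t`. -/
theorem stmt_17 (μ : ℝ → ℝ)
    (hμ : ∀ t, μ t = if 0 < t then Real.exp (-1 / t ^ 2) else 0) :
    ∃ r₀ : ℝ, 1 < r₀ ∧ ∀ r ≥ r₀,
      (∀ t > (0 : ℝ),
        deriv μ t - μ t * Real.tanh t - 2 * r * Real.tanh t / Real.cosh t ≤ 0) ∧
      (∀ t, deriv (fun s => μ s * Real.cosh s + r) t *
          (deriv (fun s => μ s * Real.cosh s + r) t
            - 2 * (μ t * Real.cosh t + r) * Real.tanh t) ≤ 0) ∧
      (∀ t, (deriv (fun s => (μ s * Real.cosh s + r) / Real.cosh s) t) ^ 2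
          - ((μ t * Real.cosh t + r) / Real.cosh t) ^ 2 < 0) := by
  obtain rfl : μ = expNegInvSqGlue := funext hμ
  refine ⟨50, by norm_num, fun r hr => ?_⟩
  have ha : ∀ t, HasDerivAt (fun s => expNegInvSqGlue s * cosh s + r)
      (expNegInvSqGlueDeriv t * cosh t + expNegInvSqGlue t * sinh t) t := fun t =>
    ((hasDerivAt_expNegInvSqGlue t).mul (hasDerivAt_cosh t)).add_const r
  have hkey : ∀ t, (expNegInvSqGlueDeriv t * cosh t + expNegInvSqGlue t * sinh t) *
      (expNegInvSqGlueDeriv t * cosh t + expNegInvSqGlue t * sinh t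
        - 2 * (expNegInvSqGlue t * cosh t + r) * tanh t) ≤ 0 := by
    intro t
    rcases le_or_gt t 0 with ht | ht
    · simp [expNegInvSqGlueDeriv, expNegInvSqGlue, ht.not_gt]
    · exact mul_sub_two_mul_tanh_nonpos (expNegInvSqGlue_nonneg t)
        (expNegInvSqGlueDeriv_nonneg t) ht.le (expNegInvSqGlueDeriv_sub_le hr ht)
  refine ⟨fun t ht => ?_, fun t => ?_, fun t => ?_⟩
  · rw [(hasDerivAt_expNegInvSqGlue t).deriv]
    exact expNegInvSqGlueDeriv_sub_le hr ht
  · rw [(ha t).deriv]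
    exact hkey t
  · have hpos : 0 < expNegInvSqGlue t * cosh t + r := by
      have := mul_nonneg (expNegInvSqGlue_nonneg t) (cosh_pos t).le
      linarith
    exact deriv_div_cosh_sq_sub_sq_neg (ha t) hpos.ne' (hkey t)
end
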